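/- For every real σ ≥ σ_min and all α, α̂ ∈ ℝ^n, the sum of the local suboptimalities dominates the σ-regularized global improvement: Σ_{k=1}^K ε_{D,k}(α) ≥ D(α̂) − D(α) − (σ/(2λn²))·‖α̂ − α‖². -/

import Mathlib

open Finset MeasureTheory

noncomputable section

/-- Squared Euclidean norm of a finite real vector. -/
def sqnorm {m : ℕ} (v : Fin m → ℝ) : ℝ := ∑ j, v j ^ 2

/-- Euclidean norm of a finite real vector. -/
def euclNorm {m : ℕ} (v : Fin m → ℝ) : ℝ := Real.sqrt (sqnorm v)

/-- Euclidean inner product. -/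
def dotp {m : ℕ} (u v : Fin m → ℝ) : ℝ := ∑ j, u j * v j

/-- `g` is the (real-valued) Fenchel conjugate of `f`:
`g u` is the least upper bound of `z ↦ u*z - f z`. -/
def IsFenchelConj (f g : ℝ → ℝ) : Prop :=
  ∀ u : ℝ, IsLUB (Set.range fun z : ℝ => u * z - f z) (g u)

/-- `f` is smooth with constant `c`: differentiable with `c`-Lipschitz derivative. -/
def SmoothWith (c : ℝ) (f : ℝ → ℝ) : Prop :=
  Differentiable ℝ f ∧ ∀ z z' : ℝ, |deriv f z - deriv f z'| ≤ c * |z - z'|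

/-- `g : ℝ → ℝ` is `γ`-strongly convex. -/
def StrongConvexWith (γ : ℝ) (g : ℝ → ℝ) : Prop :=
  ConvexOn ℝ Set.univ fun u => g u - γ / 2 * u ^ 2

variable {n d K : ℕ}

/-- `A α` where the `i`-th column of `A` is `x i / (λ n)`. -/
def matA (lam : ℝ) (x : Fin n → Fin d → ℝ) (α : Fin n → ℝ) : Fin d → ℝ :=
  ∑ i, (α i / (lam * n)) • x i

/-- The block-`k` subvector `α_[k]` of `α`. -/
def blkOf (part : Fin n → Fin K) (k : Fin K) (α : Fin n → ℝ) :
    {i : Fin n // part i = k} → ℝ :=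
  fun i => α i.1

/-- `A_[k] β`: the block-`k` submatrix of `A` applied to a block-`k` vector. -/
def blkA (lam : ℝ) (x : Fin n → Fin d → ℝ) (part : Fin n → Fin K) (k : Fin K)
    (β : {i : Fin n // part i = k} → ℝ) : Fin d → ℝ :=
  ∑ i : {i : Fin n // part i = k}, (β i / (lam * n)) • x i.1

/-- `α⟨k←β⟩`: replace the block-`k` coordinates of `α` by `β`. -/
def updBlk (part : Fin n → Fin K) (k : Fin K) (α : Fin n → ℝ)
    (β : {i : Fin n // part i = k} → ℝ) : Fin n → ℝ :=
  fun i => if h : part i = k then β ⟨i, h⟩ else α i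

/-- `ι_k β`: zero-padding of a block-`k` vector to a full vector. -/
def padBlk (part : Fin n → Fin K) (k : Fin K)
    (β : {i : Fin n // part i = k} → ℝ) : Fin n → ℝ :=
  fun i => if h : part i = k then β ⟨i, h⟩ else 0

/-- The primal objective `P(w)`. -/
def primalObj (lam : ℝ) (x : Fin n → Fin d → ℝ) (l : Fin n → ℝ → ℝ)
    (w : Fin d → ℝ) : ℝ :=
  lam / 2 * sqnorm w + (1 / (n : ℝ)) * ∑ i, l i (dotp w (x i))

/-- The dual objective `D(α)`. -/
def dualObj (lam : ℝ) (x : Fin n → Fin d → ℝ) (lstar : Fin n → ℝ → ℝ)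
    (α : Fin n → ℝ) : ℝ :=
  -(lam / 2) * sqnorm (matA lam x α) - (1 / (n : ℝ)) * ∑ i, lstar i (-(α i))

/-- The local suboptimality `ε_{D,k}(α)` on block `k`. -/
def epsD (lam : ℝ) (x : Fin n → Fin d → ℝ) (lstar : Fin n → ℝ → ℝ)
    (part : Fin n → Fin K) (k : Fin K) (α : Fin n → ℝ) : ℝ :=
  ⨆ β : {i : Fin n // part i = k} → ℝ,
    dualObj lam x lstar (updBlk part k α β) - dualObj lam x lstar α

/-- `σ_min`: the supremum over nonzero `α` of
`λ²n²·(Σ_k ‖A_[k]α_[k]‖² − ‖Aα‖²)/‖α‖²`. -/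
def sigmaMin (lam : ℝ) (x : Fin n → Fin d → ℝ) (part : Fin n → Fin K) : ℝ :=
  sSup { r : ℝ | ∃ α : Fin n → ℝ, α ≠ 0 ∧
    r = lam ^ 2 * (n : ℝ) ^ 2 *
      ((∑ k, sqnorm (blkA lam x part k (blkOf part k α))) - sqnorm (matA lam x α)) /
        sqnorm α }

/-- The local dual objective `D_k(β; w̄)` on block `k`. -/
def locDual (lam : ℝ) (x : Fin n → Fin d → ℝ) (lstar : Fin n → ℝ → ℝ)
    (part : Fin n → Fin K) (k : Fin K) (wbar : Fin d → ℝ)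
    (β : {i : Fin n // part i = k} → ℝ) : ℝ :=
  -(lam / 2) * sqnorm (wbar + blkA lam x part k β)
    - (1 / (n : ℝ)) * ∑ i : {i : Fin n // part i = k}, lstar i.1 (-(β i))
    + lam / 2 * sqnorm wbar

/-- The local primal objective `P_k(v; w̄)` on block `k`. -/
def locPrimal (lam : ℝ) (x : Fin n → Fin d → ℝ) (l : Fin n → ℝ → ℝ)
    (part : Fin n → Fin K) (k : Fin K) (wbar v : Fin d → ℝ) : ℝ :=
  (1 / (n : ℝ)) * ∑ i : {i : Fin n // part i = k}, l i.1 (dotp (wbar + v) (x i.1))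
    + lam / 2 * sqnorm v

/-- Run `H` iterations of the coordinate-wise step `st`, where `ω` lists
the (randomly chosen) coordinates used in the successive iterations. -/
def iterRun {γ : Type*} {ι : Type*} (st : ι → γ → γ) :
    (H : ℕ) → (Fin H → ι) → γ → γ
  | 0, _, b => b
  | H + 1, ω, b => iterRun st H (fun h => ω h.succ) (st (ω 0) b)

/-!
Write `Δ = α̂ - α` and let `Δ_k` be its block-`k` part, padded with zeros. Updating block `k` of
`α` to `α̂_[k]` moves `α` by `Δ_k`, and such an update is worth at most `ε_{D,k}(α)`. The
conjugate part of `D` is separable over coordinates, so its changes along the `Δ_k` add up to its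
change along `Δ`. The quadratic part is not separable: summing its changes along the `Δ_k` gives its
change along `Δ` plus the coupling defect `(λ/2)(Σ_k ‖A_[k]Δ_[k]‖² - ‖AΔ‖²)`, and by definition of
`σ_min` this defect is at most `σ/(2λn²)‖Δ‖²`.

For `ε_{D,k}(α)` to be a genuine supremum, `D` must be bounded above: since `ℓ_i*(u) ≥ -ℓ_i(0)`,
weak duality at `w = 0` gives `D ≤ P(0)`.
-/

section Vectors

variable {m : ℕ}

lemma sqnorm_nonneg (v : Fin m → ℝ) : 0 ≤ sqnorm v :=
  sum_nonneg fun _ _ => sq_nonneg _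

lemma sqnorm_pos {v : Fin m → ℝ} (hv : v ≠ 0) : 0 < sqnorm v := by
  obtain ⟨j, hj⟩ := Function.ne_iff.1 hv
  exact sum_pos' (fun _ _ => sq_nonneg _) ⟨j, mem_univ j, pow_two_pos_of_ne_zero hj⟩

lemma sqnorm_add (v w : Fin m → ℝ) : sqnorm (v + w) = sqnorm v + 2 * dotp v w + sqnorm w := by
  simp only [sqnorm, dotp, Pi.add_apply, mul_sum, ← sum_add_distrib]
  exact sum_congr rfl fun _ _ => by ring

lemma dotp_sum_right {ι : Type*} (s : Finset ι) (v : Fin m → ℝ) (w : ι → Fin m → ℝ) :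
    dotp v (∑ k ∈ s, w k) = ∑ k ∈ s, dotp v (w k) := by
  simp only [dotp, Finset.sum_apply, mul_sum]
  exact sum_comm

lemma sum_dite_zero_eq_sum_subtype {ι M : Type*} [Fintype ι] [AddCommMonoid M] {p : ι → Prop}
    [DecidablePred p] (f : {i // p i} → M) :
    ∑ i, (if h : p i then f ⟨i, h⟩ else 0) = ∑ i : {i // p i}, f i := by
  rw [← Fintype.sum_subtype_add_sum_subtype p,
    sum_eq_zero (s := (univ : Finset {i // ¬ p i})) fun i _ => dif_neg i.2, add_zero]
  exact sum_congr rfl fun i _ => dif_pos i.2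

lemma sum_sqnorm_add_sub {ι : Type*} (s : Finset ι) (a : Fin m → ℝ) (w : ι → Fin m → ℝ) :
    ∑ k ∈ s, (sqnorm (a + w k) - sqnorm a) =
      sqnorm (a + ∑ k ∈ s, w k) - sqnorm a + (∑ k ∈ s, sqnorm (w k) - sqnorm (∑ k ∈ s, w k)) := by
  simp only [sqnorm_add, dotp_sum_right, sum_sub_distrib, sum_add_distrib, ← mul_sum]
  ring

end Vectors

section Blocks

variable {n d K : ℕ} (lam : ℝ) (x : Fin n → Fin d → ℝ) (part : Fin n → Fin K)

lemma matA_apply (v : Fin n → ℝ) (j : Fin d) :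
    matA lam x v j = ∑ i, v i / (lam * n) * x i j := by
  simp [matA, Finset.sum_apply]

lemma matA_add (v w : Fin n → ℝ) : matA lam x (v + w) = matA lam x v + matA lam x w := by
  simp only [matA, Pi.add_apply, add_div, add_smul, sum_add_distrib]

lemma matA_sum {ι : Type*} (s : Finset ι) (v : ι → Fin n → ℝ) :
    matA lam x (∑ k ∈ s, v k) = ∑ k ∈ s, matA lam x (v k) := by
  simp only [matA, Finset.sum_apply, sum_div, sum_smul]
  exact sum_comm

lemma sqnorm_matA_le (v : Fin n → ℝ) :
    sqnorm (matA lam x v) ≤ (∑ i, sqnorm (x i)) / (lam * n) ^ 2 * sqnorm v := by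
  calc sqnorm (matA lam x v)
      ≤ ∑ j, (∑ i, (v i / (lam * n)) ^ 2) * ∑ i, x i j ^ 2 := by
        refine sum_le_sum fun j _ => ?_
        rw [matA_apply]
        exact sum_mul_sq_le_sq_mul_sq _ _ _
    _ = (∑ i, sqnorm (x i)) / (lam * n) ^ 2 * sqnorm v := by
        simp only [sqnorm, div_pow, ← sum_div, ← mul_sum]
        rw [sum_comm]
        ring

lemma matA_padBlk (k : Fin K) (β : {i : Fin n // part i = k} → ℝ) :
    matA lam x (padBlk part k β) = blkA lam x part k β := by
  calc ∑ i, (padBlk part k β i / (lam * n)) • x i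
      = ∑ i, if h : part i = k then (β ⟨i, h⟩ / (lam * n)) • x i else 0 :=
        sum_congr rfl fun i _ => by unfold padBlk; split_ifs <;> simp
    _ = blkA lam x part k β :=
        sum_dite_zero_eq_sum_subtype (p := fun i => part i = k) fun i => (β i / (lam * n)) • x i.1

lemma sum_padBlk_blkOf (v : Fin n → ℝ) : ∑ k, padBlk part k (blkOf part k v) = v := by
  ext i
  simp [padBlk, blkOf, Finset.sum_apply]

lemma sum_blkA_blkOf (v : Fin n → ℝ) : ∑ k, blkA lam x part k (blkOf part k v) = matA lam x v := by
  simp only [← matA_padBlk, ← matA_sum, sum_padBlk_blkOf]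

lemma sum_sqnorm_padBlk_blkOf (v : Fin n → ℝ) :
    ∑ k, sqnorm (padBlk part k (blkOf part k v)) = sqnorm v := by
  simp only [sqnorm, padBlk, blkOf, dite_pow]
  rw [sum_comm]
  simp

lemma updBlk_blkOf (k : Fin K) (α β : Fin n → ℝ) :
    updBlk part k α (blkOf part k β) = α + padBlk part k (blkOf part k (β - α)) := by
  ext i
  by_cases h : part i = k <;> simp [updBlk, padBlk, blkOf, h]

lemma sum_sum_updBlk_sub (φ : Fin n → ℝ → ℝ) (α β : Fin n → ℝ) :
    ∑ k, (∑ i, φ i (updBlk part k α (blkOf part k β) i) - ∑ i, φ i (α i)) =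
      ∑ i, φ i (β i) - ∑ i, φ i (α i) := by
  simp only [← sum_sub_distrib]
  rw [sum_comm]
  refine sum_congr rfl fun i _ => ?_
  rw [sum_eq_single (part i) (fun k _ hk => by simp [updBlk, Ne.symm hk]) (by simp)]
  simp [updBlk, blkOf]

def blockCoupling (v : Fin n → ℝ) : ℝ :=
  ∑ k, sqnorm (blkA lam x part k (blkOf part k v)) - sqnorm (matA lam x v)

lemma sum_sqnorm_blkA_le (v : Fin n → ℝ) :
    ∑ k, sqnorm (blkA lam x part k (blkOf part k v)) ≤
      (∑ i, sqnorm (x i)) / (lam * n) ^ 2 * sqnorm v := by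
  calc ∑ k, sqnorm (blkA lam x part k (blkOf part k v))
      ≤ ∑ k, (∑ i, sqnorm (x i)) / (lam * n) ^ 2 * sqnorm (padBlk part k (blkOf part k v)) :=
        sum_le_sum fun k _ => matA_padBlk lam x part k _ ▸ sqnorm_matA_le lam x _
    _ = (∑ i, sqnorm (x i)) / (lam * n) ^ 2 * sqnorm v := by
        rw [← mul_sum, sum_sqnorm_padBlk_blkOf]

lemma le_sigmaMin {v : Fin n → ℝ} (hv : v ≠ 0) :
    lam ^ 2 * (n : ℝ) ^ 2 * blockCoupling lam x part v / sqnorm v ≤ sigmaMin lam x part := by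
  refine le_csSup ⟨lam ^ 2 * n ^ 2 * ((∑ i, sqnorm (x i)) / (lam * n) ^ 2), ?_⟩ ⟨v, hv, rfl⟩
  rintro _ ⟨w, hw, rfl⟩
  rw [div_le_iff₀ (sqnorm_pos hw), mul_assoc _ _ (sqnorm w)]
  refine mul_le_mul_of_nonneg_left ?_ (by positivity)
  linarith [sum_sqnorm_blkA_le lam x part w, sqnorm_nonneg (matA lam x w)]

lemma blockCoupling_le (hlam : 0 < lam) {σ : ℝ} (hσ : sigmaMin lam x part ≤ σ)
    (v : Fin n → ℝ) :
    lam / 2 * blockCoupling lam x part v ≤ σ / (2 * lam * (n : ℝ) ^ 2) * sqnorm v := by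
  rcases eq_or_ne v 0 with rfl | hv
  · simp [blockCoupling, sqnorm, blkOf, blkA, matA]
  have hn : (0 : ℝ) < n := by
    obtain ⟨i, -⟩ := Function.ne_iff.1 hv
    exact Nat.cast_pos.2 i.pos
  have h := (le_sigmaMin lam x part hv).trans hσ
  rw [div_le_iff₀ (sqnorm_pos hv)] at h
  rw [div_mul_eq_mul_div σ, le_div_iff₀ (by positivity)]
  convert h using 1
  ring

end Blocks

section Dual

variable {n d K : ℕ} {lam : ℝ} {x : Fin n → Fin d → ℝ} {l lstar : Fin n → ℝ → ℝ}

lemma IsFenchelConj.neg_le {f g : ℝ → ℝ} (h : IsFenchelConj f g) (u : ℝ) : -f 0 ≤ g u := by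
  simpa using (h u).1 ⟨0, rfl⟩

lemma dualObj_le_primalObj_zero (hlam : 0 ≤ lam) (hconj : ∀ i, IsFenchelConj (l i) (lstar i))
    (α : Fin n → ℝ) : dualObj lam x lstar α ≤ primalObj lam x l 0 := by
  have hconj_sum : -∑ i, l i 0 ≤ ∑ i, lstar i (-α i) := by
    rw [← sum_neg_distrib]
    exact sum_le_sum fun i _ => (hconj i).neg_le _
  have := mul_le_mul_of_nonneg_left hconj_sum (by positivity : (0 : ℝ) ≤ 1 / n)
  have := mul_nonneg (by positivity : 0 ≤ lam / 2) (sqnorm_nonneg (matA lam x α))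
  have hP0 : primalObj lam x l 0 = 1 / n * ∑ i, l i 0 := by simp [primalObj, sqnorm, dotp]
  rw [hP0, dualObj]
  linarith

lemma dualObj_updBlk_sub_le_epsD (hlam : 0 ≤ lam) (hconj : ∀ i, IsFenchelConj (l i) (lstar i))
    (part : Fin n → Fin K) (k : Fin K) (α : Fin n → ℝ) (β : {i : Fin n // part i = k} → ℝ) :
    dualObj lam x lstar (updBlk part k α β) - dualObj lam x lstar α ≤
      epsD lam x lstar part k α := by
  unfold epsD
  refine le_ciSup (f := fun β => dualObj lam x lstar (updBlk part k α β) - dualObj lam x lstar α)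
    ⟨primalObj lam x l 0 - dualObj lam x lstar α, ?_⟩ β
  rintro _ ⟨γ, rfl⟩
  exact sub_le_sub_right (dualObj_le_primalObj_zero hlam hconj _) _

lemma sum_dualObj_updBlk_sub (part : Fin n → Fin K) (α αhat : Fin n → ℝ) :
    ∑ k, (dualObj lam x lstar (updBlk part k α (blkOf part k αhat)) - dualObj lam x lstar α) =
      dualObj lam x lstar αhat - dualObj lam x lstar α -
        lam / 2 * blockCoupling lam x part (αhat - α) := by
  have hquad : ∑ k, (sqnorm (matA lam x (updBlk part k α (blkOf part k αhat))) -
      sqnorm (matA lam x α)) =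
        sqnorm (matA lam x αhat) - sqnorm (matA lam x α) + blockCoupling lam x part (αhat - α) := by
    simp only [updBlk_blkOf, matA_add, matA_padBlk]
    rw [sum_sqnorm_add_sub, sum_blkA_blkOf, ← matA_add, add_sub_cancel]
    rfl
  have hsep := sum_sum_updBlk_sub part (fun i u => lstar i (-u)) α αhat
  calc ∑ k, (dualObj lam x lstar (updBlk part k α (blkOf part k αhat)) - dualObj lam x lstar α)
      = ∑ k, (-(lam / 2) * (sqnorm (matA lam x (updBlk part k α (blkOf part k αhat))) -
            sqnorm (matA lam x α)) -
          1 / n * (∑ i, lstar i (-updBlk part k α (blkOf part k αhat) i) -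
            ∑ i, lstar i (-α i))) :=
        sum_congr rfl fun k _ => by simp only [dualObj]; ring
    _ = -(lam / 2) * ∑ k, (sqnorm (matA lam x (updBlk part k α (blkOf part k αhat))) -
            sqnorm (matA lam x α)) -
          1 / n * ∑ k, (∑ i, lstar i (-updBlk part k α (blkOf part k αhat) i) -
            ∑ i, lstar i (-α i)) := by
        rw [sum_sub_distrib, ← mul_sum, ← mul_sum]
    _ = _ := by
        rw [hquad, hsep]
        simp only [dualObj]
        ring

end Dual

theorem sum_eps_ge_regularized_improvement_general
    (n d K : ℕ)
    (lam : ℝ) (hlam : 0 < lam)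
    (x : Fin n → Fin d → ℝ)
    (l lstar : Fin n → ℝ → ℝ)
    (hconj : ∀ i, IsFenchelConj (l i) (lstar i))
    (part : Fin n → Fin K)
    (σ : ℝ) (hσ : sigmaMin lam x part ≤ σ)
    (α αhat : Fin n → ℝ) :
    dualObj lam x lstar αhat - dualObj lam x lstar α
        - σ / (2 * lam * (n : ℝ) ^ 2) * sqnorm (αhat - α)
      ≤ ∑ k, epsD lam x lstar part k α :=
  calc dualObj lam x lstar αhat - dualObj lam x lstar α
        - σ / (2 * lam * (n : ℝ) ^ 2) * sqnorm (αhat - α)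
      ≤ dualObj lam x lstar αhat - dualObj lam x lstar α
        - lam / 2 * blockCoupling lam x part (αhat - α) :=
        sub_le_sub_left (blockCoupling_le lam x part hlam hσ _) _
    _ = ∑ k, (dualObj lam x lstar (updBlk part k α (blkOf part k αhat))
          - dualObj lam x lstar α) := (sum_dualObj_updBlk_sub part α αhat).symm
    _ ≤ ∑ k, epsD lam x lstar part k α :=
        sum_le_sum fun k _ => dualObj_updBlk_sub_le_epsD hlam.le hconj part k α _

/-- the sum of local suboptimalities dominates the
`σ`-regularized global improvement. -/
theorem sum_eps_ge_regularized_improvement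
    (n d K : ℕ) (hn : 0 < n) (hd : 0 < d) (hK : 0 < K)
    (lam : ℝ) (hlam : 0 < lam)
    (x : Fin n → Fin d → ℝ)
    (l lstar : Fin n → ℝ → ℝ)
    (hconj : ∀ i, IsFenchelConj (l i) (lstar i))
    (part : Fin n → Fin K) (hpart : ∀ k, ∃ i, part i = k)
    (σ : ℝ) (hσ : sigmaMin lam x part ≤ σ)
    (α αhat : Fin n → ℝ) :
    dualObj lam x lstar αhat - dualObj lam x lstar α
        - σ / (2 * lam * (n : ℝ) ^ 2) * sqnorm (αhat - α)
      ≤ ∑ k, epsD lam x lstar part k α :=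
  sum_eps_ge_regularized_improvement_general n d K lam hlam x l lstar hconj part σ hσ α αhat
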